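/- arXiv:1903.07077 — 8 statements merged into one kernel-verified Lean document; each statement's English description precedes it below -/
import Mathlib

section
/- Let p ≥ 2, k ≥ 1, m ≥ 1 be integers and let G = G^{p−1,m}_{p,pk−1}. Then in G the following identity holds: (yx)^{k−1} y (y^m (yx)^{k−1} y)^{p−1} = (yx)^{k−1} y^{m+1} x (yx)^{k−1} (y^m (yx)^k)^{p−2}. (The left-hand side is the longitude word λ' of the twisted torus knot T^{p−1,m}_{p,pk−1}.) -/
def X : FreeGroup (Fin 2) := FreeGroup.of 0
def Y : FreeGroup (Fin 2) := FreeGroup.of 1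

/-- The relator of the knot group `G^{p-1,m}_{p,pk-1}`:
`(yx)^{k-1}y(y^m(yx)^{k-1}y)^{p-2} = x(yx)^{k-1}(y^m(yx)^k)^{p-2}`. -/
def relA (p k m : ℤ) : FreeGroup (Fin 2) :=
  (Y * X) ^ (k - 1) * Y * (Y ^ m * (Y * X) ^ (k - 1) * Y) ^ (p - 2) *
    (X * (Y * X) ^ (k - 1) * (Y ^ m * (Y * X) ^ k) ^ (p - 2))⁻¹

theorem statement4 (p k m : ℤ) (hp : 2 ≤ p) (hk : 1 ≤ k) (hm : 1 ≤ m)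
    (x y : PresentedGroup ({relA p k m} : Set (FreeGroup (Fin 2))))
    (hx : x = PresentedGroup.of 0) (hy : y = PresentedGroup.of 1) :
    (y * x) ^ (k - 1) * y * (y ^ m * (y * x) ^ (k - 1) * y) ^ (p - 1) =
      (y * x) ^ (k - 1) * y ^ (m + 1) * x * (y * x) ^ (k - 1) *
        (y ^ m * (y * x) ^ k) ^ (p - 2) := by
  set φ : FreeGroup (Fin 2) →* PresentedGroup ({relA p k m} : Set (FreeGroup (Fin 2))) :=
    QuotientGroup.mk' _ with hφ
  have hone : φ (relA p k m) = 1 := by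
    rw [hφ]
    exact (QuotientGroup.eq_one_iff _).2
      (Subgroup.subset_normalClosure (Set.mem_singleton _))
  have hx' : φ X = x := by rw [hx]; rfl
  have hy' : φ Y = y := by rw [hy]; rfl
  have hrel : (y * x) ^ (k - 1) * y * (y ^ m * (y * x) ^ (k - 1) * y) ^ (p - 2) =
      x * (y * x) ^ (k - 1) * (y ^ m * (y * x) ^ k) ^ (p - 2) := by
    have this : φ ((Y * X) ^ (k - 1) * Y * (Y ^ m * (Y * X) ^ (k - 1) * Y) ^ (p - 2) *
        (X * (Y * X) ^ (k - 1) * (Y ^ m * (Y * X) ^ k) ^ (p - 2))⁻¹) = 1 := hone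
    simp only [map_mul, map_zpow, map_inv] at this
    rw [hx', hy'] at this
    rw [mul_inv_eq_one] at this
    exact this
  have hsplit : (y ^ m * (y * x) ^ (k - 1) * y) ^ (p - 1) =
      (y ^ m * (y * x) ^ (k - 1) * y) * (y ^ m * (y * x) ^ (k - 1) * y) ^ (p - 2) := by
    rw [← zpow_one_add]; ring_nf
  calc (y * x) ^ (k - 1) * y * (y ^ m * (y * x) ^ (k - 1) * y) ^ (p - 1)
      = (y * x) ^ (k - 1) * y ^ (m + 1) *
        ((y * x) ^ (k - 1) * y * (y ^ m * (y * x) ^ (k - 1) * y) ^ (p - 2)) := by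
        rw [hsplit, show y ^ (m + 1) = y * y ^ m by
          rw [← zpow_one_add, add_comm]]
        simp only [mul_assoc]
    _ = (y * x) ^ (k - 1) * y ^ (m + 1) *
        (x * (y * x) ^ (k - 1) * (y ^ m * (y * x) ^ k) ^ (p - 2)) := by rw [hrel]
    _ = (y * x) ^ (k - 1) * y ^ (m + 1) * x * (y * x) ^ (k - 1) *
        (y ^ m * (y * x) ^ k) ^ (p - 2) := by group
end

section
/- Let p ≥ 3 and k ≥ 1 be integers and let G = G^{p−2,1}_{p,pk−1}. Set z = (yx)^{1−2k}((yx)^{k−1}y)^2. Then in G the following identity holds: ((yx)^{k−1}y)^2 (z (yx)^{k−1} y)^{p−2} = x (yx)^{k−1} (y (yx)^{k−1} y)^{p−2} (yx)^{k−1} y. (The left-hand side is the longitude word λ' of the twisted torus knot T^{p−2,1}_{p,pk−1}.) -/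
/-- The word `z = (yx)^{1-2k}((yx)^{k-1}y)^2`. -/
def Zw (k : ℤ) : FreeGroup (Fin 2) :=
  (Y * X) ^ (1 - 2 * k) * ((Y * X) ^ (k - 1) * Y) ^ (2 : ℤ)

/-- The relator of the knot group `G^{p-2,1}_{p,pk-1}`:
`((yx)^{k-1}y)^2(z(yx)^{k-1}y)^{p-3} = x(yx)^{2k-1}(z(yx)^k)^{p-3}`. -/
def relC (p k : ℤ) : FreeGroup (Fin 2) :=
  ((Y * X) ^ (k - 1) * Y) ^ (2 : ℤ) * (Zw k * (Y * X) ^ (k - 1) * Y) ^ (p - 3) *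
    (X * (Y * X) ^ (2 * k - 1) * (Zw k * (Y * X) ^ k) ^ (p - 3))⁻¹

/-!
Write `u = yx`, `a = u^{k-1} y` and `b = a² u^{1-k}`. Both `z u^k` and `y u^{k-1} y` are
conjugates of `b` by powers of `u`, so the relation reads `a² (z a)^{p-3} = x b^{p-3} u^{2k-1}`.
Multiplying it on the right by `z a` and using `u^{2k-1} z = a²` turns the longitude into
`x b^{p-3} a³`, and the right-hand side of the identity equals `x b^{p-2} u^{k-1} a`, which is
the same word.
-/

namespace TwistedTorusKnot

variable {G : Type*} [Group G] (x y : G) (k : ℤ)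

lemma zw_mul_zpow_eq_conj :
    (y * x) ^ (1 - 2 * k) * ((y * x) ^ (k - 1) * y) ^ (2 : ℤ) * (y * x) ^ k =
      (y * x) ^ (1 - 2 * k) * (((y * x) ^ (k - 1) * y) ^ (2 : ℤ) * (y * x) ^ (1 - k)) *
        ((y * x) ^ (1 - 2 * k))⁻¹ := by
  group

lemma mul_zpow_mul_eq_conj :
    y * (y * x) ^ (k - 1) * y =
      (y * x) ^ (1 - k) * (((y * x) ^ (k - 1) * y) ^ (2 : ℤ) * (y * x) ^ (1 - k)) *
        ((y * x) ^ (1 - k))⁻¹ := by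
  simp only [zpow_two]
  group

theorem longitude_eq_of_relation (z : G) (n : ℤ)
    (hz : z = (y * x) ^ (1 - 2 * k) * ((y * x) ^ (k - 1) * y) ^ (2 : ℤ))
    (hrel : ((y * x) ^ (k - 1) * y) ^ (2 : ℤ) * (z * (y * x) ^ (k - 1) * y) ^ n =
      x * (y * x) ^ (2 * k - 1) * (z * (y * x) ^ k) ^ n) :
    ((y * x) ^ (k - 1) * y) ^ (2 : ℤ) * (z * (y * x) ^ (k - 1) * y) ^ (n + 1) =
      x * (y * x) ^ (k - 1) * (y * (y * x) ^ (k - 1) * y) ^ (n + 1) *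
        (y * x) ^ (k - 1) * y := by
  have hzu := zw_mul_zpow_eq_conj x y k
  have hyy := mul_zpow_mul_eq_conj x y k
  rw [← hz] at hzu
  set u := y * x
  set a := u ^ (k - 1) * y
  set b := a ^ (2 : ℤ) * u ^ (1 - k)
  have hza : z * u ^ (k - 1) * y = z * a := mul_assoc _ _ _
  rw [hza] at hrel ⊢
  calc a ^ (2 : ℤ) * (z * a) ^ (n + 1) = a ^ (2 : ℤ) * (z * a) ^ n * (z * a) := by
        rw [zpow_add_one, mul_assoc]
    _ = x * u ^ (2 * k - 1) * (z * u ^ k) ^ n * (z * a) := by rw [hrel]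
    _ = x * b ^ n * (u ^ (2 * k - 1) * z) * a := by rw [hzu, conj_zpow]; group
    _ = x * b ^ n * a ^ (2 : ℤ) * a := by rw [hz]; group
    _ = x * b ^ n * b * (u ^ (k - 1) * a) := by simp only [b]; group
    _ = x * u ^ (k - 1) * (u ^ (1 - k) * b ^ (n + 1) * (u ^ (1 - k))⁻¹) * u ^ (k - 1) * y := by
        rw [zpow_add_one]; simp only [a]; group
    _ = x * u ^ (k - 1) * (y * u ^ (k - 1) * y) ^ (n + 1) * u ^ (k - 1) * y := by
        rw [hyy, conj_zpow]

lemma map_Zw (f : FreeGroup (Fin 2) →* G) :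
    f (Zw k) = (f Y * f X) ^ (1 - 2 * k) * ((f Y * f X) ^ (k - 1) * f Y) ^ (2 : ℤ) := by
  simp only [Zw, map_mul, map_zpow]

lemma map_relC_eq_one_iff (f : FreeGroup (Fin 2) →* G) (p : ℤ) :
    f (relC p k) = 1 ↔
      ((f Y * f X) ^ (k - 1) * f Y) ^ (2 : ℤ) * (f (Zw k) * (f Y * f X) ^ (k - 1) * f Y) ^ (p - 3) =
        f X * (f Y * f X) ^ (2 * k - 1) * (f (Zw k) * (f Y * f X) ^ k) ^ (p - 3) := by
  simp only [relC, map_mul, map_zpow, map_inv, mul_inv_eq_one]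

end TwistedTorusKnot

theorem statement6_general (p k : ℤ)
    (x y z : PresentedGroup ({relC p k} : Set (FreeGroup (Fin 2))))
    (hx : x = PresentedGroup.of 0) (hy : y = PresentedGroup.of 1)
    (hz : z = (y * x) ^ (1 - 2 * k) * ((y * x) ^ (k - 1) * y) ^ (2 : ℤ)) :
    ((y * x) ^ (k - 1) * y) ^ (2 : ℤ) * (z * (y * x) ^ (k - 1) * y) ^ (p - 2) =
      x * (y * x) ^ (k - 1) * (y * (y * x) ^ (k - 1) * y) ^ (p - 2) *
        (y * x) ^ (k - 1) * y := by
  have hrel := (TwistedTorusKnot.map_relC_eq_one_iff k (PresentedGroup.mk _) p).1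
    (PresentedGroup.one_of_mem (Set.mem_singleton _))
  have hX : PresentedGroup.mk _ X = x := hx ▸ rfl
  have hY : PresentedGroup.mk _ Y = y := hy ▸ rfl
  rw [TwistedTorusKnot.map_Zw, hX, hY, ← hz] at hrel
  rw [show p - 2 = p - 3 + 1 by ring]
  exact TwistedTorusKnot.longitude_eq_of_relation x y k z (p - 3) hz hrel

theorem statement6 (p k : ℤ) (hp : 3 ≤ p) (hk : 1 ≤ k)
    (x y z : PresentedGroup ({relC p k} : Set (FreeGroup (Fin 2))))
    (hx : x = PresentedGroup.of 0) (hy : y = PresentedGroup.of 1)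
    (hz : z = (y * x) ^ (1 - 2 * k) * ((y * x) ^ (k - 1) * y) ^ (2 : ℤ)) :
    ((y * x) ^ (k - 1) * y) ^ (2 : ℤ) * (z * (y * x) ^ (k - 1) * y) ^ (p - 2) =
      x * (y * x) ^ (k - 1) * (y * (y * x) ^ (k - 1) * y) ^ (p - 2) *
        (y * x) ^ (k - 1) * y :=
  statement6_general p k x y z hx hy hz
end

section
/- Let p ≥ 3 and k ≥ 1 be integers and let G = G^{2,1}_{p,pk−1}. Then in G the following identity holds: ((yx)^{k−1}y)^{p−2} [ (yx)^{1−(p−2)k} ((yx)^{k−1}y)^{p−1} ]^2 = x ((yx)^{k−1}y)^{p−1} x ((yx)^{k−1}y)^{−(p−1)} (yx)^k ((yx)^{k−1}y)^{p−1} x. (The left-hand side is the longitude word λ' of the twisted torus knot T^{2,1}_{p,pk−1}.) -/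
/-- The relator of the knot group `G^{2,1}_{p,pk-1}`:
`((yx)^{k-1}y)^{p-2}(yx)^{1-(p-2)k}((yx)^{k-1}y)^{p-1} = x((yx)^{k-1}y)^{p-1}x`. -/
def relE (p k : ℤ) : FreeGroup (Fin 2) :=
  ((Y * X) ^ (k - 1) * Y) ^ (p - 2) * (Y * X) ^ (1 - (p - 2) * k) *
      ((Y * X) ^ (k - 1) * Y) ^ (p - 1) *
    (X * ((Y * X) ^ (k - 1) * Y) ^ (p - 1) * X)⁻¹

theorem statement8 (p k : ℤ) (hp : 3 ≤ p) (hk : 1 ≤ k)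
    (x y : PresentedGroup ({relE p k} : Set (FreeGroup (Fin 2))))
    (hx : x = PresentedGroup.of 0) (hy : y = PresentedGroup.of 1) :
    ((y * x) ^ (k - 1) * y) ^ (p - 2) *
        ((y * x) ^ (1 - (p - 2) * k) * ((y * x) ^ (k - 1) * y) ^ (p - 1)) ^ (2 : ℤ) =
      x * ((y * x) ^ (k - 1) * y) ^ (p - 1) * x *
        ((y * x) ^ (k - 1) * y) ^ (-(p - 1)) * (y * x) ^ k *
        ((y * x) ^ (k - 1) * y) ^ (p - 1) * x := by
  set b : PresentedGroup ({relE p k} : Set (FreeGroup (Fin 2))) := y * x with hb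
  set c : PresentedGroup ({relE p k} : Set (FreeGroup (Fin 2))) := b ^ (k - 1) * y with hc
  -- the relator maps to 1
  have hrel : PresentedGroup.mk {relE p k}
      (((Y * X) ^ (k - 1) * Y) ^ (p - 2) * (Y * X) ^ (1 - (p - 2) * k) *
        ((Y * X) ^ (k - 1) * Y) ^ (p - 1) *
        (X * ((Y * X) ^ (k - 1) * Y) ^ (p - 1) * X)⁻¹) = 1 := by
    apply (QuotientGroup.eq_one_iff _).2
    exact Subgroup.subset_normalClosure rfl
  have hmapX : PresentedGroup.mk {relE p k} X = x := by rw [hx]; rfl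
  have hmapY : PresentedGroup.mk {relE p k} Y = y := by rw [hy]; rfl
  have hr : c ^ (p - 2) * b ^ (1 - (p - 2) * k) * c ^ (p - 1) = x * c ^ (p - 1) * x := by
    simp only [map_mul, map_zpow, map_inv, hmapX, hmapY, mul_inv_eq_one] at hrel
    rw [hc, hb]
    exact hrel
  have hbk : b ^ k = c * x := by
    rw [hc, mul_assoc, ← hb, ← zpow_add_one b (k - 1)]
    ring_nf
  have h2 : b ^ (1 - (p - 2) * k) * c ^ (p - 1) = c ^ (2 - p) * (x * c ^ (p - 1) * x) := by
    rw [← hr]; group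
  rw [hbk]
  calc c ^ (p - 2) * (b ^ (1 - (p - 2) * k) * c ^ (p - 1)) ^ (2 : ℤ)
      = (c ^ (p - 2) * b ^ (1 - (p - 2) * k) * c ^ (p - 1)) *
        (b ^ (1 - (p - 2) * k) * c ^ (p - 1)) := by rw [zpow_two]; group
    _ = (x * c ^ (p - 1) * x) * (c ^ (2 - p) * (x * c ^ (p - 1) * x)) := by rw [hr, h2]
    _ = x * c ^ (p - 1) * x * c ^ (-(p - 1)) * (c * x) * c ^ (p - 1) * x := by group
end

section
/- Let p ≥ 3 and k ≥ 1 be integers and let G = G^{2,1}_{p,pk+1}. Then in G the following identities hold: [ (xy)^{(p−2)k+1} ((xy)^k x)^{−(p−3)} ]^2 ((xy)^k x)^{p−2} = (xy)^{(p−2)k+1} ((xy)^k x)^{−(p−3)} (xy)^{(p−1)k+1} x = x (xy)^{(p−1)k+1} x (xy)^{−((p−1)k+1)} (xy)^k x (xy)^{(p−1)k+1} x. (The left-hand side is the longitude word λ' of the twisted torus knot T^{2,1}_{p,pk+1}.) -/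
/-- The relator of the knot group `G^{2,1}_{p,pk+1}`:
`x(xy)^{(p-1)k+1}x = (xy)^{(p-2)k+1}((xy)^k x)^{-(p-2)}(xy)^{(p-1)k+1}`. -/
def relF (p k : ℤ) : FreeGroup (Fin 2) :=
  X * (X * Y) ^ ((p - 1) * k + 1) * X *
    ((X * Y) ^ ((p - 2) * k + 1) * ((X * Y) ^ k * X) ^ (-(p - 2)) *
      (X * Y) ^ ((p - 1) * k + 1))⁻¹

theorem statement9 (p k : ℤ) (hp : 3 ≤ p) (hk : 1 ≤ k)
    (x y : PresentedGroup ({relF p k} : Set (FreeGroup (Fin 2))))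
    (hx : x = PresentedGroup.of 0) (hy : y = PresentedGroup.of 1) :
    (((x * y) ^ ((p - 2) * k + 1) * ((x * y) ^ k * x) ^ (-(p - 3))) ^ (2 : ℤ) *
        ((x * y) ^ k * x) ^ (p - 2) =
      (x * y) ^ ((p - 2) * k + 1) * ((x * y) ^ k * x) ^ (-(p - 3)) *
        (x * y) ^ ((p - 1) * k + 1) * x) ∧
    ((x * y) ^ ((p - 2) * k + 1) * ((x * y) ^ k * x) ^ (-(p - 3)) *
        (x * y) ^ ((p - 1) * k + 1) * x =
      x * (x * y) ^ ((p - 1) * k + 1) * x * (x * y) ^ (-((p - 1) * k + 1)) *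
        (x * y) ^ k * x * (x * y) ^ ((p - 1) * k + 1) * x) := by
  -- the relation holds in the presented group
  have h1 : PresentedGroup.mk {relF p k} (relF p k) = 1 := by
    apply (QuotientGroup.eq_one_iff _).mpr
    exact Subgroup.subset_normalClosure rfl
  have hrel : x * (x * y) ^ ((p - 1) * k + 1) * x =
      (x * y) ^ ((p - 2) * k + 1) * ((x * y) ^ k * x) ^ (-(p - 2)) *
        (x * y) ^ ((p - 1) * k + 1) := by
    have hX : PresentedGroup.mk {relF p k} X = x := by rw [hx]; rfl
    have hY : PresentedGroup.mk {relF p k} Y = y := by rw [hy]; rfl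
    have h2 : PresentedGroup.mk {relF p k}
        (X * (X * Y) ^ ((p - 1) * k + 1) * X *
          ((X * Y) ^ ((p - 2) * k + 1) * ((X * Y) ^ k * X) ^ (-(p - 2)) *
            (X * Y) ^ ((p - 1) * k + 1))⁻¹) = 1 := h1
    simp only [map_mul, map_zpow, map_inv, hX, hY, mul_inv_eq_one] at h2
    exact h2
  set a : PresentedGroup ({relF p k} : Set (FreeGroup (Fin 2))) := x * y with ha
  have hBC : a ^ ((p - 2) * k + 1) * (a ^ k * x) = a ^ ((p - 1) * k + 1) * x := by
    rw [← mul_assoc, ← zpow_add]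
    congr 1
    ring_nf
  have hCC : (a ^ k * x) ^ (-(p - 3)) * (a ^ k * x) ^ (p - 2) = a ^ k * x := by
    rw [← zpow_add]
    have : -(p - 3) + (p - 2) = 1 := by ring
    rw [this, zpow_one]
  have hC2 : (a ^ k * x) ^ (-(p - 2)) * (a ^ k * x) = (a ^ k * x) ^ (-(p - 3)) := by
    have : -(p - 3) = -(p - 2) + 1 := by ring
    rw [this, zpow_add, zpow_one]
  constructor
  · calc (a ^ ((p - 2) * k + 1) * (a ^ k * x) ^ (-(p - 3))) ^ (2 : ℤ) *
          (a ^ k * x) ^ (p - 2)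
        = a ^ ((p - 2) * k + 1) * (a ^ k * x) ^ (-(p - 3)) *
            (a ^ ((p - 2) * k + 1) * ((a ^ k * x) ^ (-(p - 3)) *
              (a ^ k * x) ^ (p - 2))) := by
          rw [zpow_two]; group
      _ = a ^ ((p - 2) * k + 1) * (a ^ k * x) ^ (-(p - 3)) *
            (a ^ ((p - 2) * k + 1) * (a ^ k * x)) := by rw [hCC]
      _ = a ^ ((p - 2) * k + 1) * (a ^ k * x) ^ (-(p - 3)) *
            a ^ ((p - 1) * k + 1) * x := by rw [hBC]; simp [mul_assoc]
  · calc a ^ ((p - 2) * k + 1) * (a ^ k * x) ^ (-(p - 3)) *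
          a ^ ((p - 1) * k + 1) * x
        = a ^ ((p - 2) * k + 1) * ((a ^ k * x) ^ (-(p - 2)) * (a ^ k * x)) *
            a ^ ((p - 1) * k + 1) * x := by rw [hC2]
      _ = a ^ ((p - 2) * k + 1) * (a ^ k * x) ^ (-(p - 2)) *
            a ^ ((p - 1) * k + 1) * (a ^ ((p - 1) * k + 1))⁻¹ *
            (a ^ k * x) * a ^ ((p - 1) * k + 1) * x := by group
      _ = x * a ^ ((p - 1) * k + 1) * x * (a ^ ((p - 1) * k + 1))⁻¹ *
            (a ^ k * x) * a ^ ((p - 1) * k + 1) * x := by rw [hrel]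
      _ = x * a ^ ((p - 1) * k + 1) * x * a ^ (-((p - 1) * k + 1)) *
            a ^ k * x * a ^ ((p - 1) * k + 1) * x := by
          rw [zpow_neg]; group
end

section
/- Let p ≥ 3 and k ≥ 1 be integers, let G = G^{2,1}_{p,pk−1}, and let λ' denote the element x((yx)^{k−1}y)^{p−1}x((yx)^{k−1}y)^{−(p−1)}(yx)^k((yx)^{k−1}y)^{p−1}x of G. Then there do not exist a group homomorphism ρ : G → Homeo⁺(ℝ) and a real number α such that ρ(x)α = α, ρ(y)α > α and ρ(λ')α = α. -/
/-! Auxiliary lemmas about order isomorphisms of `ℝ`. -/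

private lemma oi_mul_apply (f g : ℝ ≃o ℝ) (t : ℝ) : (f * g) t = f (g t) := rfl

private lemma oi_zpow_neg_apply (f : ℝ ≃o ℝ) (m : ℤ) (t : ℝ) :
    (f ^ (-m)) ((f ^ m) t) = t := by
  rw [zpow_neg]; exact RelIso.inv_apply_self _ _

private lemma oi_zpow_apply_neg (f : ℝ ≃o ℝ) (m : ℤ) (t : ℝ) :
    (f ^ m) ((f ^ (-m)) t) = t := by
  rw [zpow_neg]; exact RelIso.apply_inv_self _ _

private lemma oi_zpow_succ_apply (f : ℝ ≃o ℝ) (m : ℤ) (t : ℝ) :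
    f ((f ^ m) t) = (f ^ (m + 1)) t := by
  rw [show (m + 1 : ℤ) = 1 + m from by ring, zpow_add, zpow_one]; rfl

private lemma oi_fix_pow (f : ℝ ≃o ℝ) {c : ℝ} (h : f c = c) : ∀ n : ℕ, (f ^ n) c = c := by
  intro n
  induction n with
  | zero => rw [pow_zero]; rfl
  | succ n ih => rw [pow_succ, oi_mul_apply, h, ih]

private lemma oi_fix_zpow (f : ℝ ≃o ℝ) {c : ℝ} (h : f c = c) (m : ℤ) : (f ^ m) c = c := by
  cases m with
  | ofNat n => rw [Int.ofNat_eq_natCast, zpow_natCast]; exact oi_fix_pow f h n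
  | negSucc n =>
      rw [zpow_negSucc]
      have h2 : (f ^ (n + 1)) c = c := oi_fix_pow f h (n + 1)
      calc ((f ^ (n + 1))⁻¹) c = ((f ^ (n + 1))⁻¹) ((f ^ (n + 1)) c) := by rw [h2]
        _ = c := RelIso.inv_apply_self _ _

private lemma oi_pos_orbit (f : ℝ ≃o ℝ) (α : ℝ) (hf : α < f α) :
    ∀ (n : ℕ) (s : ℝ), α < s → α < (f ^ n) s := by
  intro n
  induction n with
  | zero => intro s hs; rw [pow_zero]; exact hs
  | succ n ih =>
      intro s hs
      rw [pow_succ, oi_mul_apply]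
      exact ih (f s) (lt_trans hf (f.lt_iff_lt.mpr hs))

private lemma oi_pos_zpow (f : ℝ ≃o ℝ) (α : ℝ) (hf : α < f α) {m : ℤ} (hm : 1 ≤ m) :
    α < (f ^ m) α := by
  have h0 : (0 : ℤ) ≤ m := by omega
  have hmn : f ^ m = f ^ (m.toNat) := by rw [← zpow_natCast, Int.toNat_of_nonneg h0]
  rw [hmn]
  obtain ⟨n, hn⟩ : ∃ n, m.toNat = n + 1 := ⟨m.toNat - 1, by omega⟩
  rw [hn, pow_succ, oi_mul_apply]
  exact oi_pos_orbit f α hf n (f α) hf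

private lemma oi_fix_of_pow (f : ℝ ≃o ℝ) {c : ℝ} {m : ℤ} (hm : 1 ≤ m)
    (h : (f ^ m) c = c) : f c = c := by
  have h0 : (0 : ℤ) ≤ m := by omega
  have hmn : f ^ m = f ^ (m.toNat) := by rw [← zpow_natCast, Int.toNat_of_nonneg h0]
  obtain ⟨n, hn⟩ : ∃ n, m.toNat = n + 1 := ⟨m.toNat - 1, by omega⟩
  rw [hmn, hn] at h
  rcases lt_trichotomy (f c) c with h1 | h1 | h1
  · exfalso
    have key : ∀ j : ℕ, (f ^ (j + 1)) c < c := by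
      intro j
      induction j with
      | zero => rw [pow_one]; exact h1
      | succ j ih =>
          rw [pow_succ', oi_mul_apply]
          exact lt_trans (f.lt_iff_lt.mpr ih) h1
    exact absurd h (ne_of_lt (key n))
  · exact h1
  · exfalso
    have key : ∀ j : ℕ, c < (f ^ (j + 1)) c := by
      intro j
      induction j with
      | zero => rw [pow_one]; exact h1
      | succ j ih =>
          rw [pow_succ', oi_mul_apply]
          exact lt_trans h1 (f.lt_iff_lt.mpr ih)
    exact absurd h (ne_of_gt (key n))

theorem statement10 (p k : ℤ) (hp : 3 ≤ p) (hk : 1 ≤ k)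
    (x y lam : PresentedGroup ({relE p k} : Set (FreeGroup (Fin 2))))
    (hx : x = PresentedGroup.of 0) (hy : y = PresentedGroup.of 1)
    (hlam : lam = x * ((y * x) ^ (k - 1) * y) ^ (p - 1) * x *
      ((y * x) ^ (k - 1) * y) ^ (-(p - 1)) * (y * x) ^ k *
      ((y * x) ^ (k - 1) * y) ^ (p - 1) * x) :
    ¬ ∃ (ρ : PresentedGroup ({relE p k} : Set (FreeGroup (Fin 2))) →* (ℝ ≃o ℝ)) (α : ℝ),
        ρ x α = α ∧ α < ρ y α ∧ ρ lam α = α := by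
  intro hEx
  obtain ⟨ρ, α, hxa, hya, hla⟩ := hEx
  subst hx; subst hy; subst hlam
  -- expand ρ applied to the λ' word
  simp only [map_mul, map_zpow] at hla
  -- the relator maps to 1
  have hrel0 : PresentedGroup.mk {relE p k} (relE p k) = 1 :=
    (QuotientGroup.eq_one_iff _).mpr (Subgroup.subset_normalClosure (Set.mem_singleton _))
  have hrel1 : (ρ.comp (PresentedGroup.mk {relE p k})) (relE p k) = 1 := by
    rw [MonoidHom.comp_apply, hrel0, map_one]
  have hrel2 : (ρ.comp (PresentedGroup.mk {relE p k}))
      (((Y * X) ^ (k - 1) * Y) ^ (p - 2) * (Y * X) ^ (1 - (p - 2) * k) *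
          ((Y * X) ^ (k - 1) * Y) ^ (p - 1) *
        (X * ((Y * X) ^ (k - 1) * Y) ^ (p - 1) * X)⁻¹) = 1 := hrel1
  have hof0 : (ρ.comp (PresentedGroup.mk {relE p k})) (FreeGroup.of (0 : Fin 2)) =
      ρ (PresentedGroup.of (0 : Fin 2)) := rfl
  have hof1 : (ρ.comp (PresentedGroup.mk {relE p k})) (FreeGroup.of (1 : Fin 2)) =
      ρ (PresentedGroup.of (1 : Fin 2)) := rfl
  simp only [X, Y, map_mul, map_zpow, map_inv] at hrel2
  rw [hof0, hof1, mul_inv_eq_one] at hrel2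
  -- abbreviations
  set A : ℝ ≃o ℝ := ρ (PresentedGroup.of (0 : Fin 2)) with hA
  set B : ℝ ≃o ℝ := ρ (PresentedGroup.of (1 : Fin 2)) with hB
  set W : ℝ ≃o ℝ := (B * A) ^ (k - 1) * B with hW
  -- hrel1 : W^(p-2) * (B*A)^(1-(p-2)*k) * W^(p-1) = A * W^(p-1) * A
  -- hla : (A * W^(p-1) * A * W^(-(p-1)) * (B*A)^k * W^(p-1) * A) α = α
  -- basic group identity : (B*A)^k = W * A
  have hfW : (B * A) ^ k = W * A := by
    have h1 : (B * A) ^ (k - 1) * (B * A) = (B * A) ^ k := by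
      rw [← zpow_add_one, show (k - 1 + 1 : ℤ) = k from by ring]
    rw [hW, mul_assoc, h1]
  -- positivity facts
  have hfa : α < (B * A) α := by rw [oi_mul_apply, hxa]; exact hya
  have hWa : α < W α := by
    rw [hW, oi_mul_apply]
    have h2 : ((B * A) : ℝ ≃o ℝ) ^ (k - 1) = ((B * A) : ℝ ≃o ℝ) ^ ((k - 1).toNat) := by
      rw [← zpow_natCast, Int.toNat_of_nonneg (by omega : (0 : ℤ) ≤ k - 1)]
    rw [h2]
    exact oi_pos_orbit (B * A) α hfa _ (B α) hya
  have hβq : α < (W ^ (p - 1)) α := oi_pos_zpow W α hWa (by omega : (1 : ℤ) ≤ p - 1)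
  have hβnq : (W ^ (-(p - 1))) α < α := by
    have h := ((W ^ (-(p - 1)) : ℝ ≃o ℝ)).lt_iff_lt.mpr hβq
    rwa [oi_zpow_neg_apply] at h
  -- inverse of A fixes α, and A-inequality transfer
  have hxa' : (A⁻¹) α = α := by
    conv_lhs => rw [← hxa]
    exact RelIso.inv_apply_self A α
  have hAlt : ∀ s : ℝ, s < α → A s < α := by
    intro s hs
    have h := A.lt_iff_lt.mpr hs
    rwa [hxa] at h
  have hAltr : ∀ s : ℝ, A s < α → s < α := by
    intro s hs
    exact A.lt_iff_lt.mp (by rw [hxa]; exact hs)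
  -- rewrite the λ' condition using (yx)^k = w x
  have key : A * W ^ (p - 1) * A * W ^ (-(p - 1)) * (B * A) ^ k * W ^ (p - 1) * A
      = A * W ^ (p - 1) * A * W ^ (-(p - 2)) * A * W ^ (p - 1) * A := by
    rw [hfW]; group
  rw [key] at hla
  simp only [oi_mul_apply] at hla
  rw [hxa] at hla
  -- hla : A ((W^(p-1)) (A ((W^(-(p-2))) (A ((W^(p-1)) α))))) = α
  have h1 : (W ^ (p - 1)) (A ((W ^ (-(p - 2))) (A ((W ^ (p - 1)) α)))) = α := by
    have h := congrArg (⇑(A⁻¹ : ℝ ≃o ℝ)) hla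
    rwa [RelIso.inv_apply_self, hxa'] at h
  have h2 : A ((W ^ (-(p - 2))) (A ((W ^ (p - 1)) α))) = (W ^ (-(p - 1))) α := by
    have h := congrArg (⇑(W ^ (-(p - 1)) : ℝ ≃o ℝ)) h1
    rwa [oi_zpow_neg_apply] at h
  have hu0 : (W ^ (-(p - 2))) (A ((W ^ (p - 1)) α)) < α := by
    refine hAltr _ ?_
    rw [h2]; exact hβnq
  have hGneg : A ((W ^ (p - 1)) α) < (W ^ (p - 2)) α := by
    have h3 := ((W ^ (p - 2) : ℝ ≃o ℝ)).lt_iff_lt.mpr hu0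
    rwa [oi_zpow_apply_neg] at h3
  -- (BA)^k moves (W^(p-1)) α down …
  have hfkβq : ((B * A) ^ k) ((W ^ (p - 1)) α) < (W ^ (p - 1)) α := by
    have e0 : ((B * A) ^ k) ((W ^ (p - 1)) α)
        = (W ^ (p - 1)) ((W ^ (-(p - 2))) (A ((W ^ (p - 1)) α))) := by
      conv_lhs => rw [hfW]
      rw [oi_mul_apply]
      conv_lhs =>
        rw [show A ((W ^ (p - 1)) α)
            = (W ^ (p - 2)) ((W ^ (-(p - 2))) (A ((W ^ (p - 1)) α))) from
          (oi_zpow_apply_neg W (p - 2) _).symm]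
      rw [oi_zpow_succ_apply, show (p - 2 + 1 : ℤ) = p - 1 from by ring]
    rw [e0]
    exact ((W ^ (p - 1) : ℝ ≃o ℝ)).lt_iff_lt.mpr hu0
  -- … but moves α up
  have hfkα : α < ((B * A) ^ k) α := by
    rw [hfW, oi_mul_apply, hxa]; exact hWa
  -- hence (BA)^k has a fixed point c in (α, (W^(p-1)) α)
  have hcont : Continuous fun t : ℝ => ((B * A) ^ k : ℝ ≃o ℝ) t - t :=
    (((B * A) ^ k : ℝ ≃o ℝ)).continuous.sub continuous_id
  obtain ⟨c, hcmem, hceq⟩ :=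
    intermediate_value_Ioo' (le_of_lt hβq) hcont.continuousOn
      (Set.mem_Ioo.mpr ⟨sub_neg.mpr hfkβq, sub_pos.mpr hfkα⟩)
  have hfc : (B * A) c = c := oi_fix_of_pow (B * A) hk (sub_eq_zero.mp hceq)
  have hFc : (((B * A) : ℝ ≃o ℝ) ^ ((p - 2) * k - 1)) c = c := oi_fix_zpow (B * A) hfc _
  -- the relation expresses (BA)^((p-2)k-1) in terms of A and W
  have hU : ((B * A) : ℝ ≃o ℝ) ^ ((p - 2) * k - 1)
      = W ^ (p - 1) * A⁻¹ * W ^ (-(p - 1)) * A⁻¹ * W ^ (p - 2) := by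
    have h0 : ((B * A) : ℝ ≃o ℝ) ^ (1 - (p - 2) * k)
        = W ^ (-(p - 2)) * (A * W ^ (p - 1) * A) * W ^ (-(p - 1)) := by
      rw [← hrel2]; group
    rw [show ((p - 2) * k - 1 : ℤ) = -(1 - (p - 2) * k) from by ring, zpow_neg, h0]
    group
  have hline : (W ^ (p - 1)) ((A⁻¹) ((W ^ (-(p - 1))) ((A⁻¹) ((W ^ (p - 2)) c)))) = c := by
    have h := hFc
    rw [hU] at h
    simpa only [oi_mul_apply] using h
  -- rearrange: A⁻¹ (W^(p-2) c) = W^(p-1) (A (W^(-(p-1)) c))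
  have h4 : (A⁻¹) ((W ^ (-(p - 1))) ((A⁻¹) ((W ^ (p - 2)) c))) = (W ^ (-(p - 1))) c := by
    have h := congrArg (⇑(W ^ (-(p - 1)) : ℝ ≃o ℝ)) hline
    rwa [oi_zpow_neg_apply] at h
  have h5 : (W ^ (-(p - 1))) ((A⁻¹) ((W ^ (p - 2)) c)) = A ((W ^ (-(p - 1))) c) := by
    have h := congrArg (⇑A) h4
    rwa [RelIso.apply_inv_self] at h
  have h6 : (A⁻¹) ((W ^ (p - 2)) c) = (W ^ (p - 1)) (A ((W ^ (-(p - 1))) c)) := by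
    have h := congrArg (⇑(W ^ (p - 1) : ℝ ≃o ℝ)) h5
    rwa [oi_zpow_apply_neg] at h
  -- final contradiction
  have h7 : (W ^ (-(p - 1))) c < α := by
    have h := ((W ^ (-(p - 1)) : ℝ ≃o ℝ)).lt_iff_lt.mpr hcmem.2
    rwa [oi_zpow_neg_apply] at h
  have h8 : A ((W ^ (-(p - 1))) c) < α := hAlt _ h7
  have h9 : (W ^ (p - 1)) (A ((W ^ (-(p - 1))) c)) < (W ^ (p - 1)) α :=
    ((W ^ (p - 1) : ℝ ≃o ℝ)).lt_iff_lt.mpr h8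
  have h10 : (A⁻¹) ((W ^ (p - 2)) c) < (W ^ (p - 1)) α := by rw [h6]; exact h9
  have h11 : (W ^ (p - 2)) c < A ((W ^ (p - 1)) α) := by
    have h := A.lt_iff_lt.mpr h10
    rwa [RelIso.apply_inv_self] at h
  have h13 : c < α := ((W ^ (p - 2) : ℝ ≃o ℝ)).lt_iff_lt.mp (lt_trans h11 hGneg)
  exact absurd h13 (not_lt.mpr (le_of_lt hcmem.1))
end

section
/- Let p ≥ 3 and k ≥ 1 be integers, let G = G^{2,1}_{p,pk+1}, and let λ' denote the element x(xy)^{(p−1)k+1}x(xy)^{−((p−1)k+1)}(xy)^k x(xy)^{(p−1)k+1}x of G. Then there do not exist a group homomorphism ρ : G → Homeo⁺(ℝ) and a real number α such that ρ(x)α = α, ρ(y)α > α and ρ(λ')α = α. -/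
/-!
Write `g = ρ x`, `G = ρ (x y)`, `h = G ^ k g`, `N = (p-1)k+1`, `M = (p-2)k+1`, so that `N = k + M`.
Since `g` fixes `α` and `y` pushes it up, `β := G ^ N α` lies strictly above `α`.
Applying the relation at `α` gives `g β = G ^ M σ` with `σ := h ^ (-(p-2)) β`, hence `h β = G ^ N σ`,
and `λ' α = α` collapses to `g (G ^ N (g σ)) = α`, forcing `σ < α`.
Then `h β = G ^ N σ < β`, so the nonnegative power `h ^ (-(p-2))` can only move `β` up: `β ≤ σ`,
which contradicts `σ < α < β`.
-/

namespace OrderIso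

variable {L : Type*} [LinearOrder L]

theorem le_zpow_apply_of_le_apply (f : L ≃o L) {a : L} (h : a ≤ f a) {n : ℤ} (hn : 0 ≤ n) :
    a ≤ (f ^ n) a := by
  lift n to ℕ using hn
  induction n with
  | zero => exact le_rfl
  | succ n ih =>
    calc a ≤ (f ^ (n : ℤ)) a := ih
      _ ≤ (f ^ (n : ℤ)) (f a) := (f ^ (n : ℤ)).monotone h
      _ = (f ^ ((n + 1 : ℕ) : ℤ)) a := by rw [Nat.cast_succ, zpow_add_one]; rfl

theorem lt_zpow_apply_of_lt_apply (f : L ≃o L) {a : L} (h : a < f a) {n : ℤ} (hn : 0 < n) :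
    a < (f ^ n) a :=
  calc a ≤ (f ^ (n - 1)) a := f.le_zpow_apply_of_le_apply h.le (by omega)
    _ < (f ^ (n - 1)) (f a) := (f ^ (n - 1)).strictMono h
    _ = (f ^ n) a := by rw [← RelIso.mul_apply, ← zpow_add_one, sub_add_cancel]

theorem le_zpow_neg_apply_of_apply_le (f : L ≃o L) {b : L} (h : f b ≤ b) {n : ℤ} (hn : 0 ≤ n) :
    b ≤ (f ^ (-n)) b := by
  rw [zpow_neg, ← inv_zpow]
  refine f⁻¹.le_zpow_apply_of_le_apply ?_ hn
  rwa [← f.le_iff_le, RelIso.apply_inv_self]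

end OrderIso

theorem apply_ne_of_knot_relation {L : Type*} [LinearOrder L] (g G : L ≃o L) {a : L}
    {k M N n : ℤ} (hN : k + M = N) (hn : 0 ≤ n) (hga : g a = a) (haG : a < (G ^ N) a)
    (hrel : g * G ^ N * g = G ^ M * (G ^ k * g) ^ (-n) * G ^ N) :
    (g * G ^ N * g * G ^ (-N) * G ^ k * g * G ^ N * g) a ≠ a := by
  intro hlam
  set h := G ^ k * g
  set β := (G ^ N) a
  set σ := (h ^ (-n)) β
  have hgβ : g β = (G ^ M) σ := by
    simpa only [RelIso.mul_apply, hga] using DFunLike.congr_fun hrel a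
  have hhβ : (G ^ k) (g β) = (G ^ N) σ := by
    rw [hgβ, ← hN, zpow_add, RelIso.mul_apply]
  have hgσ : (G ^ N) (g σ) = a := by
    simp only [RelIso.mul_apply, hga] at hlam
    rwa [hhβ, zpow_neg, RelIso.inv_apply_self, ← hga, g.apply_eq_iff_eq] at hlam
  have hσa : σ < a := by
    rw [← g.lt_iff_lt, hga, ← (G ^ N).lt_iff_lt, hgσ]
    exact haG
  have hhβ_le : h β ≤ β := by
    rw [RelIso.mul_apply, hhβ]
    exact ((G ^ N).strictMono hσa).le
  have hβσ : β ≤ σ := h.le_zpow_neg_apply_of_apply_le hhβ_le hn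
  exact (hσa.trans haG).not_ge hβσ

theorem knotGroup_relation {p k : ℤ} {x y : PresentedGroup ({relF p k} : Set (FreeGroup (Fin 2)))}
    (hx : x = PresentedGroup.of 0) (hy : y = PresentedGroup.of 1) :
    x * (x * y) ^ ((p - 1) * k + 1) * x =
      (x * y) ^ ((p - 2) * k + 1) * ((x * y) ^ k * x) ^ (-(p - 2)) * (x * y) ^ ((p - 1) * k + 1) := by
  subst hx hy
  have := PresentedGroup.mk_eq_mk_of_mul_inv_mem (Set.mem_singleton (relF p k))
  simp only [map_mul, map_zpow] at this
  exact this

theorem statement11 (p k : ℤ) (hp : 3 ≤ p) (hk : 1 ≤ k)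
    (x y lam : PresentedGroup ({relF p k} : Set (FreeGroup (Fin 2))))
    (hx : x = PresentedGroup.of 0) (hy : y = PresentedGroup.of 1)
    (hlam : lam = x * (x * y) ^ ((p - 1) * k + 1) * x *
      (x * y) ^ (-((p - 1) * k + 1)) * (x * y) ^ k * x *
      (x * y) ^ ((p - 1) * k + 1) * x) :
    ¬ ∃ (ρ : PresentedGroup ({relF p k} : Set (FreeGroup (Fin 2))) →* (ℝ ≃o ℝ)) (α : ℝ),
        ρ x α = α ∧ α < ρ y α ∧ ρ lam α = α := by
  rintro ⟨ρ, α, hxα, hyα, hlamα⟩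
  have hrel := congrArg ρ (knotGroup_relation hx hy)
  subst hlam
  simp only [map_mul, map_zpow] at hrel hlamα
  have hGα : α < (ρ x * ρ y) α := by
    simpa only [RelIso.mul_apply, hxα] using (ρ x).strictMono hyα
  exact apply_ne_of_knot_relation (ρ x) (ρ x * ρ y) (by ring) (by omega) hxα
    ((ρ x * ρ y).lt_zpow_apply_of_lt_apply hGα (by nlinarith)) hrel hlamα
end

section
/- Let p ≥ 3 and k ≥ 1 be integers, let G = G^{2,1}_{p,pk+1}, and let λ' denote the element x(xy)^{(p−1)k+1}x(xy)^{−((p−1)k+1)}(xy)^k x(xy)^{(p−1)k+1}x of G. Suppose ρ : G → Homeo⁺(ℝ) is a group homomorphism such that ρ(x)α > α for all α ∈ ℝ. Then ρ(x^{−(pk+p+2)} λ')α > ρ(y)α for all α ∈ ℝ. -/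
/-!
Write `a = ρ x`, `c = ρ (x y)`, `g = c ^ k * a`, `M = (p-2)k+1`, `N = (p-1)k+1`, and compare
homeomorphisms pointwise. Since `a` moves every point up, so does each conjugate of `a`. The
relation reads `c^M = a (c^N a c^{-N}) g^{p-2}`, hence `c^M > a g^{p-2}`. As `g ≥ c^k`, this gives
`c > a`; then `g ≥ a^{k+1}`, so `c^M > a^{M+p-2}` and `c^N > a^{N+p-2}`. In the group, the relation
turns `λ'` into `x² c^N x c^{-M} x c^N`, and comparing it factor by factor with
`x^{pk+p+2} y = x² · x^{N+p-2} · x · x^{k-1} · c` gives the claim.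
-/

namespace OrderIso

variable {α : Type*} [Preorder α] {f g : α ≃o α}

theorem pow_apply_le_pow_apply (h : ∀ x, f x ≤ g x) (n : ℕ) (x : α) :
    (f ^ n) x ≤ (g ^ n) x := by
  induction n generalizing x with
  | zero => rfl
  | succ n ih =>
    calc (f ^ (n + 1)) x = f ((f ^ n) x) := by rw [pow_succ']; rfl
      _ ≤ f ((g ^ n) x) := by gcongr; exact ih x
      _ ≤ g ((g ^ n) x) := h _
      _ = (g ^ (n + 1)) x := by rw [pow_succ']; rfl

theorem zpow_apply_le_zpow_apply (h : ∀ x, f x ≤ g x) {n : ℤ} (hn : 0 ≤ n) (x : α) :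
    (f ^ n) x ≤ (g ^ n) x := by
  lift n to ℕ using hn
  simpa only [zpow_natCast] using pow_apply_le_pow_apply h n x

theorem lt_apply_conj_apply (hf : ∀ x, x < f x) (u : α ≃o α) (x : α) : x < u (f (u⁻¹ x)) :=
  u.symm_apply_lt.1 (hf _)

end OrderIso

/-- The defining relation of `G^{2,1}_{p,pk+1}`, in the generators `x` and `c = xy`. -/
def TwistedTorusRel {G : Type*} [Group G] (p k : ℤ) (x c : G) : Prop :=
  x * c ^ ((p - 1) * k + 1) * x =
    c ^ ((p - 2) * k + 1) * (c ^ k * x) ^ (-(p - 2)) * c ^ ((p - 1) * k + 1)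

/-- The element `λ'`, in the generators `x` and `c = xy`. -/
def lambdaWord {G : Type*} [Group G] (p k : ℤ) (x c : G) : G :=
  x * c ^ ((p - 1) * k + 1) * x * c ^ (-((p - 1) * k + 1)) * c ^ k * x *
    c ^ ((p - 1) * k + 1) * x

theorem map_lambdaWord {G H : Type*} [Group G] [Group H] (f : G →* H) (p k : ℤ) (x c : G) :
    f (lambdaWord p k x c) = lambdaWord p k (f x) (f c) := by
  simp only [lambdaWord, map_mul, map_zpow]

namespace TwistedTorusRel

theorem presentedGroup_of (p k : ℤ) :
    TwistedTorusRel p k (PresentedGroup.of (rels := {relF p k}) 0)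
      (PresentedGroup.of 0 * PresentedGroup.of 1) := by
  have h := PresentedGroup.mk_eq_mk_of_mul_inv_mem (Set.mem_singleton (relF p k))
  simp only [X, Y, map_mul, map_zpow] at h
  exact h

section Group

variable {G H : Type*} [Group G] [Group H] {p k : ℤ} {x c : G}

theorem map (h : TwistedTorusRel p k x c) (f : G →* H) : TwistedTorusRel p k (f x) (f c) := by
  simpa only [TwistedTorusRel, map_mul, map_zpow] using congrArg f h

theorem lambdaWord_eq (h : TwistedTorusRel p k x c) :
    lambdaWord p k x c =
      x * x * c ^ ((p - 1) * k + 1) * x * c ^ (-((p - 2) * k + 1)) * x *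
        c ^ ((p - 1) * k + 1) := by
  obtain ⟨g, hg⟩ : ∃ g, g = c ^ k * x := ⟨_, rfl⟩
  have hginv : g⁻¹ = x⁻¹ * c ^ (-k) := by rw [hg, mul_inv_rev, zpow_neg]
  have hgl : g ^ (-(p - 2)) = x⁻¹ * c ^ (-k) * g ^ (-(p - 3)) := by
    rw [show -(p - 2) = -1 + -(p - 3) by ring, zpow_add, zpow_neg_one, hginv]
  have hgr : g ^ (-(p - 2)) = g ^ (-(p - 3)) * x⁻¹ * c ^ (-k) := by
    rw [show -(p - 2) = -(p - 3) + -1 by ring, zpow_add, zpow_neg_one, hginv, mul_assoc]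
  rw [TwistedTorusRel, ← hg] at h
  calc lambdaWord p k x c
      = x * c ^ ((p - 1) * k + 1) * (x * c ^ (-((p - 1) * k + 1)) * c ^ k *
          (x * c ^ ((p - 1) * k + 1) * x)) := by simp only [lambdaWord]; group
    _ = x * c ^ ((p - 2) * k + 1) * g ^ (-(p - 3)) * c ^ ((p - 1) * k + 1) := by
      rw [h, hgl]; group
    _ = x * (x * c ^ ((p - 1) * k + 1) * x) * c ^ (-((p - 2) * k + 1)) * x *
          c ^ ((p - 1) * k + 1) := by
      rw [h, hgr]; group
    _ = _ := by group

end Group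

section Order

variable {α : Type*} [Preorder α] {p k : ℤ} {a c : α ≃o α}

theorem apply_zpow_apply_lt_zpow_apply (h : TwistedTorusRel p k a c) (ha : ∀ x, x < a x)
    (x : α) :
    a (((c ^ k * a) ^ (p - 2)) x) < (c ^ ((p - 2) * k + 1)) x := by
  have hM : c ^ ((p - 2) * k + 1) =
      a * c ^ ((p - 1) * k + 1) * a * (c ^ ((p - 1) * k + 1))⁻¹ * (c ^ k * a) ^ (p - 2) := by
    rw [h]; group
  rw [hM]
  exact (a.lt_iff_lt).2 (OrderIso.lt_apply_conj_apply ha _ _)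

theorem apply_lt_apply (h : TwistedTorusRel p k a c) (ha : ∀ x, x < a x) (hp : 2 ≤ p)
    (x : α) : a x < c x := by
  have hg : ∀ y, (c ^ k) y ≤ (c ^ k * a) y := fun y => (c ^ k).monotone (ha y).le
  set y := (c ^ (k * (p - 2)))⁻¹ x
  calc a x = a (((c ^ k) ^ (p - 2)) y) := by rw [← zpow_mul, RelIso.apply_inv_self]
    _ ≤ a (((c ^ k * a) ^ (p - 2)) y) := by
      gcongr; exact OrderIso.zpow_apply_le_zpow_apply hg (by omega) y
    _ < (c ^ ((p - 2) * k + 1)) y := h.apply_zpow_apply_lt_zpow_apply ha y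
    _ = (c ^ ((p - 2) * k + 1) * (c ^ (k * (p - 2)))⁻¹) x := rfl
    _ = c x := by congr 1; group

theorem zpow_apply_lt_zpow_apply (h : TwistedTorusRel p k a c) (ha : ∀ x, x < a x)
    (hp : 2 ≤ p) (hk : 0 ≤ k) (x : α) :
    (a ^ ((p - 1) * k + 1 + (p - 2))) x < (c ^ ((p - 1) * k + 1)) x := by
  have hk' : ∀ y, (a ^ k) y ≤ (c ^ k) y :=
    OrderIso.zpow_apply_le_zpow_apply (fun y => (h.apply_lt_apply ha hp y).le) hk
  have hg : ∀ y, (a ^ (k + 1)) y ≤ (c ^ k * a) y := fun y => by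
    rw [zpow_add_one]; exact hk' (a y)
  calc (a ^ ((p - 1) * k + 1 + (p - 2))) x = (a ^ k) (a (((a ^ (k + 1)) ^ (p - 2)) x)) := by
        rw [show a ^ ((p - 1) * k + 1 + (p - 2)) = a ^ k * a * (a ^ (k + 1)) ^ (p - 2) by group]
        rfl
    _ ≤ (c ^ k) (a (((a ^ (k + 1)) ^ (p - 2)) x)) := hk' _
    _ ≤ (c ^ k) (a (((c ^ k * a) ^ (p - 2)) x)) := by
      gcongr; exact OrderIso.zpow_apply_le_zpow_apply hg (by omega) x
    _ < (c ^ k) ((c ^ ((p - 2) * k + 1)) x) := by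
      gcongr; exact h.apply_zpow_apply_lt_zpow_apply ha x
    _ = (c ^ ((p - 1) * k + 1)) x := by
      rw [show c ^ ((p - 1) * k + 1) = c ^ k * c ^ ((p - 2) * k + 1) by group]; rfl

theorem apply_lt_zpow_neg_mul_lambdaWord_apply {b : α ≃o α} (h : TwistedTorusRel p k a (a * b))
    (ha : ∀ x, x < a x) (hp : 2 ≤ p) (hk : 1 ≤ k) (x : α) :
    b x < (a ^ (-(p * k + p + 2)) * lambdaWord p k a (a * b)) x := by
  rw [h.lambdaWord_eq]
  obtain ⟨c, hc⟩ : ∃ c, c = a * b := ⟨_, rfl⟩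
  rw [← hc] at h ⊢
  have hN : (c ^ ((p - 1) * k + 1)) x = (c ^ ((p - 2) * k + 1)) ((c ^ (k - 1)) (a (b x))) := by
    rw [show c ^ ((p - 1) * k + 1) = c ^ ((p - 2) * k + 1) * c ^ (k - 1) * c by group, hc]; rfl
  rw [RelIso.mul_apply, zpow_neg]
  refine (a ^ (p * k + p + 2)).lt_symm_apply.2 ?_
  calc (a ^ (p * k + p + 2)) (b x)
      = a (a ((a ^ ((p - 1) * k + 1 + (p - 2))) (a ((a ^ (k - 1)) (a (b x)))))) := by
        rw [show a ^ (p * k + p + 2) =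
          a * a * a ^ ((p - 1) * k + 1 + (p - 2)) * a * a ^ (k - 1) * a by group]
        rfl
    _ < a (a ((c ^ ((p - 1) * k + 1)) (a ((a ^ (k - 1)) (a (b x)))))) := by
      gcongr; exact h.zpow_apply_lt_zpow_apply ha hp (by omega) _
    _ ≤ a (a ((c ^ ((p - 1) * k + 1)) (a ((c ^ (k - 1)) (a (b x)))))) := by
      gcongr
      exact OrderIso.zpow_apply_le_zpow_apply (fun y => (h.apply_lt_apply ha hp y).le)
        (by omega) _
    _ < a (a ((c ^ ((p - 1) * k + 1)) (a ((c ^ (-((p - 2) * k + 1)))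
          (a ((c ^ ((p - 2) * k + 1)) ((c ^ (k - 1)) (a (b x))))))))) := by
      gcongr
      rw [zpow_neg]
      simpa only [inv_inv] using OrderIso.lt_apply_conj_apply ha (c ^ ((p - 2) * k + 1))⁻¹ _
    _ = a (a ((c ^ ((p - 1) * k + 1)) (a ((c ^ (-((p - 2) * k + 1)))
          (a ((c ^ ((p - 1) * k + 1)) x)))))) := by rw [hN]
    _ = _ := rfl

end Order

end TwistedTorusRel

theorem statement17 (p k : ℤ) (hp : 3 ≤ p) (hk : 1 ≤ k)
    (x y lam : PresentedGroup ({relF p k} : Set (FreeGroup (Fin 2))))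
    (hx : x = PresentedGroup.of 0) (hy : y = PresentedGroup.of 1)
    (hlam : lam = x * (x * y) ^ ((p - 1) * k + 1) * x *
      (x * y) ^ (-((p - 1) * k + 1)) * (x * y) ^ k * x *
      (x * y) ^ ((p - 1) * k + 1) * x)
    (ρ : PresentedGroup ({relF p k} : Set (FreeGroup (Fin 2))) →* (ℝ ≃o ℝ))
    (hρ : ∀ α : ℝ, α < ρ x α) :
    ∀ α : ℝ, ρ y α < ρ (x ^ (-(p * k + p + 2)) * lam) α := by
  have hrel : TwistedTorusRel p k (ρ x) (ρ x * ρ y) := by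
    subst hx hy
    simpa only [map_mul] using (TwistedTorusRel.presentedGroup_of p k).map ρ
  intro α
  rw [show lam = lambdaWord p k x (x * y) from hlam, map_mul, map_zpow, map_lambdaWord, map_mul]
  exact hrel.apply_lt_zpow_neg_mul_lambdaWord_apply hρ (by omega) hk α
end

section
/- Let f and g be order-preserving homeomorphisms of ℝ and let j ≥ 0 be an integer. Then it is impossible that both of the following hold: (i) gα < fα for all α ∈ ℝ, and (ii) (fg)^j f α < g (fg)^j α for all α ∈ ℝ. -/
theorem statement18 (f g : ℝ ≃o ℝ) (j : ℕ) :
    ¬ ((∀ α : ℝ, g α < f α) ∧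
       (∀ α : ℝ, ((f * g) ^ j * f) α < (g * (f * g) ^ j) α)) := by
  rintro ⟨h1, h2⟩
  set u : ℝ ≃o ℝ := f * g with hu
  set v : ℝ ≃o ℝ := g * f with hv
  -- semiconjugation: u^j * f = f * v^j
  have hsc : ∀ n : ℕ, u ^ n * f = f * v ^ n := by
    intro n
    have : SemiconjBy f v u := by
      simp only [SemiconjBy, hu, hv, mul_assoc]
    exact ((this.pow_right n).eq).symm
  -- h := g⁻¹ * f is above the identity
  have hgt : ∀ α : ℝ, α < (g⁻¹ * f) α := by
    intro α
    have h' : g⁻¹ (g α) < g⁻¹ (f α) := (OrderIso.lt_iff_lt _).mpr (h1 α)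
    have e : g⁻¹ (g α) = α := g.symm_apply_apply α
    rwa [e] at h'
  -- Step 1 : v^j α < u^j α
  have s1 : ∀ α : ℝ, (v ^ j) α < (u ^ j) α := by
    intro α
    have key : (u ^ j * f) α < (g * (u ^ j)) α := h2 α
    have key2 : g⁻¹ ((u ^ j * f) α) < g⁻¹ ((g * (u ^ j)) α) :=
      (OrderIso.lt_iff_lt _).mpr key
    have e1 : g⁻¹ ((g * (u ^ j)) α) = (u ^ j) α := g.symm_apply_apply _
    have e2 : g⁻¹ ((u ^ j * f) α) = (g⁻¹ * f) ((v ^ j) α) := by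
      have : (g⁻¹ : ℝ ≃o ℝ) * (u ^ j * f) = (g⁻¹ * f) * v ^ j := by
        rw [hsc j, mul_assoc]
      exact congrFun (congrArg (fun (e : ℝ ≃o ℝ) => (e : ℝ → ℝ)) this) α
    rw [e1, e2] at key2
    exact (hgt _).trans key2
  -- Step 2 : u β < v β for all β
  have s2 : ∀ β : ℝ, u β < v β := by
    intro β
    set α : ℝ := (v ^ j).symm β with hα
    have hvβ : (v ^ j) α = β := (v ^ j).apply_symm_apply β
    have c1 : u ((v ^ j) α) < u ((u ^ j) α) := (OrderIso.lt_iff_lt _).mpr (s1 α)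
    have c2 : u ((u ^ j) α) = (u ^ j * f) (g α) := by
      have : u * u ^ j = u ^ j * f * g := by
        rw [← pow_succ' u j, pow_succ u j, hu, mul_assoc]
      exact congrFun (congrArg (fun (e : ℝ ≃o ℝ) => (e : ℝ → ℝ)) this) α
    have c3 : (u ^ j * f) (g α) < (u ^ j * f) (f α) :=
      (OrderIso.lt_iff_lt _).mpr (h1 α)
    have c4 : (u ^ j * f) (f α) < (g * u ^ j) (f α) := h2 (f α)
    have c5 : (g * u ^ j) (f α) = v ((v ^ j) α) := by
      have : (g * u ^ j) * f = v * v ^ j := by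
        rw [mul_assoc, hsc j, hv, ← mul_assoc]
      exact congrFun (congrArg (fun (e : ℝ ≃o ℝ) => (e : ℝ → ℝ)) this) α
    have := (c1.trans_eq c2).trans (c3.trans (c4.trans_eq c5))
    rwa [hvβ] at this
  -- Step 3 : u^n α ≤ v^n α
  have s3 : ∀ (n : ℕ) (α : ℝ), (u ^ n) α ≤ (v ^ n) α := by
    intro n
    induction n with
    | zero => intro α; simp
    | succ n ih =>
      intro α
      have e1 : (u ^ (n + 1)) α = (u ^ n) (u α) := by
        rw [pow_succ u n]; rfl
      have e2 : (v ^ (n + 1)) α = (v ^ n) (v α) := by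
        rw [pow_succ v n]; rfl
      rw [e1, e2]
      exact (ih (u α)).trans (le_of_lt ((OrderIso.lt_iff_lt _).mpr (s2 α)))
  exact absurd (s1 0) (not_lt.mpr (s3 j 0))
end
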